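/- In the topological amalgamated limit setting, for every i ∈ I the projection p^ℓ_i : X_ℓ → X_i is an open map; moreover it is a continuous surjection and p^ℓ_i = p^j_i ∘ p^ℓ_j for all i ≤ j. -/

import Mathlib

/-- A distributive almost-lattice: a partial order where any two elements have a meet,
any two elements with a common upper bound have a join, among any three elements two have
a common upper bound, the distributive laws hold whenever both sides exist, and
conditions (v) and (vi) hold. -/
structure DistribAlmostLattice (I : Type*) [PartialOrder I] where
  meet : I → I → I
  join : I → I → I
  /-- (i): `meet i j` is the greatest lower bound of `i` and `j` -/
  meet_isGLB : ∀ i j : I, IsGLB {i, j} (meet i j)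
  /-- (ii): if `i`, `j` have a common upper bound, `join i j` is their least upper bound -/
  join_isLUB : ∀ i j : I, (∃ u, i ≤ u ∧ j ≤ u) → IsLUB {i, j} (join i j)
  /-- (iii): among any three elements, two have a common upper bound -/
  two_of_three : ∀ i j k : I,
    (∃ u, i ≤ u ∧ j ≤ u) ∨ (∃ u, i ≤ u ∧ k ≤ u) ∨ (∃ u, j ≤ u ∧ k ≤ u)
  /-- (iv): distributivity of meet over join (whenever both sides exist) -/
  distrib_meet_join : ∀ i j k : I, (∃ u, j ≤ u ∧ k ≤ u) →
    meet i (join j k) = join (meet i j) (meet i k)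
  /-- (iv): distributivity of join over meet (whenever both sides exist) -/
  distrib_join_meet : ∀ i j k : I, (∃ u, i ≤ u ∧ j ≤ u) → (∃ u, i ≤ u ∧ k ≤ u) →
    join i (meet j k) = meet (join i j) (join i k)
  /-- (v) -/
  cond_v : ∀ i j j' : I, ¬(∃ u, i ≤ u ∧ j ≤ u) →
    ((¬(∃ u, i ≤ u ∧ j' ≤ u) ∧ ¬(∃ u, i ≤ u ∧ meet j j' ≤ u)) ∨
      join i j' = join i (meet j j'))
  /-- (vi) -/
  cond_vi : ∀ i j j' : I, ¬(∃ u, j ≤ u ∧ j' ≤ u) →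
    join (meet i j) (meet i j') = i

namespace DistribAlmostLattice

variable {I : Type*} [PartialOrder I] (L : DistribAlmostLattice I)

theorem meet_le_left (i j : I) : L.meet i j ≤ i :=
  (L.meet_isGLB i j).1 (Set.mem_insert _ _)

theorem meet_le_right (i j : I) : L.meet i j ≤ j :=
  (L.meet_isGLB i j).1 (Set.mem_insert_of_mem _ rfl)

theorem le_join_left (i j : I) (h : ∃ u, i ≤ u ∧ j ≤ u) : i ≤ L.join i j :=
  (L.join_isLUB i j h).1 (Set.mem_insert _ _)

theorem le_join_right (i j : I) (h : ∃ u, i ≤ u ∧ j ≤ u) : j ≤ L.join i j :=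
  (L.join_isLUB i j h).1 (Set.mem_insert_of_mem _ rfl)

end DistribAlmostLattice

/-- A subset `F` of a distributive almost-lattice is closed if it is closed under meets
and under joins whenever they exist. -/
def IsClosedSubset {I : Type*} [PartialOrder I] (L : DistribAlmostLattice I)
    (F : Set I) : Prop :=
  ∀ i ∈ F, ∀ j ∈ F, L.meet i j ∈ F ∧ ((∃ u, i ≤ u ∧ j ≤ u) → L.join i j ∈ F)

section TopAmal

variable {I : Type*} [PartialOrder I]
variable (X : I → Type*) (p : ∀ i j : I, i ≤ j → X j → X i)

/-- Membership in the topological amalgamated limit `X_ℓ ⊆ Π_{i∈I} X_i`. -/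
def InXl (x : ∀ i, X i) : Prop :=
  ∀ i j : I, ∀ hij : i ≤ j, p i j hij (x j) = x i

/-- Membership in `Y_F`: threads indexed by a subset `F ⊆ I`. -/
def InY (F : Set I) (y : ∀ i, X i) : Prop :=
  ∀ k ∈ F, ∀ j ∈ F, ∀ h : k ≤ j, p k j h (y j) = y k

end TopAmal

/-!
Call `a₁, a₂` peaks if they are equal or have no common upper bound. By (iii), the down-sets of
some pair of peaks cover any finite set of indices. Points over two peaks that agree below both
determine a thread on `↓a₁ ∪ ↓a₂`, and such a thread extends to one whose peaks lie above any
given index: by lifting along a surjection, or, for separated peaks, by condition (v) and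
correctness. Compactness of `Π i, X i` turns these finite extensions into a point of `X_ℓ`.

So every compatible pair of points over peaks `a₁ ≥ i` and `a₂` comes from `X_ℓ`. A basic
neighbourhood of `x ∈ X_ℓ` restricts finitely many coordinates, all below such peaks; the first
points of the compatible pairs obeying these restrictions form an open subset of `X a₁`, because
the bonding maps are open, and its image in `X i` lies in the image of the neighbourhood.
-/

open Set Filter Topology

namespace DistribAlmostLattice

variable {I : Type*} [PartialOrder I] (L : DistribAlmostLattice I)

theorem le_meet {i j k : I} (hi : k ≤ i) (hj : k ≤ j) : k ≤ L.meet i j :=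
  (L.meet_isGLB i j).2 (by rintro _ (rfl | rfl) <;> assumption)

theorem join_of_le {i j : I} (h : i ≤ j) : L.join i j = j :=
  le_antisymm ((L.join_isLUB i j ⟨j, h, le_rfl⟩).2 (by rintro _ (rfl | rfl) <;> [exact h; rfl]))
    (L.le_join_right i j ⟨j, h, le_rfl⟩)

theorem join_meet_eq_of_le {a b t : I} (hab : ¬∃ u, a ≤ u ∧ b ≤ u) (hat : a ≤ t) :
    L.join a (L.meet b t) = t := by
  rcases L.cond_v a b t hab with ⟨h, -⟩ | h
  · exact absurd ⟨t, hat, le_rfl⟩ h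
  · rw [← h, L.join_of_le hat]

end DistribAlmostLattice

namespace AmalgamatedLimit

section Peaks

variable {I : Type*} [PartialOrder I]

def IsPeakPair (a₁ a₂ : I) : Prop := (∃ u, a₁ ≤ u ∧ a₂ ≤ u) → a₁ = a₂

theorem isPeakPair_self (a : I) : IsPeakPair a a := fun _ => rfl

theorem isPeakPair_of_not_ub {a₁ a₂ : I} (h : ¬∃ u, a₁ ≤ u ∧ a₂ ≤ u) : IsPeakPair a₁ a₂ :=
  fun hu => absurd hu h

theorem IsPeakPair.symm {a₁ a₂ : I} (h : IsPeakPair a₁ a₂) : IsPeakPair a₂ a₁ :=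
  fun ⟨u, h₂, h₁⟩ => (h ⟨u, h₁, h₂⟩).symm

theorem IsPeakPair.exists_insert (L : DistribAlmostLattice I) {a₁ a₂ : I}
    (h : IsPeakPair a₁ a₂) (k : I) :
    ∃ b₁ b₂, IsPeakPair b₁ b₂ ∧ a₁ ≤ b₁ ∧ (a₂ ≤ b₁ ∨ a₂ ≤ b₂) ∧ (k ≤ b₁ ∨ k ≤ b₂) := by
  by_cases hk₁ : ∃ u, k ≤ u ∧ a₁ ≤ u
  · have hk := L.le_join_left k a₁ hk₁
    have ha₁ := L.le_join_right k a₁ hk₁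
    by_cases h₁₂ : ∃ u, a₁ ≤ u ∧ a₂ ≤ u
    · obtain rfl := h h₁₂
      exact ⟨_, _, isPeakPair_self _, ha₁, Or.inl ha₁, Or.inl hk⟩
    · exact ⟨_, a₂, isPeakPair_of_not_ub fun ⟨u, h₁, h₂⟩ => h₁₂ ⟨u, ha₁.trans h₁, h₂⟩,
        ha₁, Or.inr le_rfl, Or.inl hk⟩
  by_cases hk₂ : ∃ u, k ≤ u ∧ a₂ ≤ u
  · have hk := L.le_join_left k a₂ hk₂
    exact ⟨a₁, _, isPeakPair_of_not_ub fun ⟨u, h₁, h₂⟩ => hk₁ ⟨u, hk.trans h₂, h₁⟩,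
      le_rfl, Or.inr (L.le_join_right k a₂ hk₂), Or.inr hk⟩
  obtain rfl : a₁ = a₂ := h (((L.two_of_three k a₁ a₂).resolve_left hk₁).resolve_left hk₂)
  exact ⟨a₁, k, isPeakPair_of_not_ub fun ⟨u, h₁, h₂⟩ => hk₁ ⟨u, h₂, h₁⟩,
    le_rfl, Or.inl le_rfl, Or.inr le_rfl⟩

theorem exists_isPeakPair_cover (L : DistribAlmostLattice I) (i : I) (K : Finset I) :
    ∃ a₁ a₂, IsPeakPair a₁ a₂ ∧ i ≤ a₁ ∧ ∀ k ∈ K, k ≤ a₁ ∨ k ≤ a₂ := by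
  classical
  induction K using Finset.induction_on with
  | empty => exact ⟨i, i, isPeakPair_self i, le_rfl, by simp⟩
  | insert k K _ ih =>
    obtain ⟨a₁, a₂, ha, hi, hK⟩ := ih
    obtain ⟨b₁, b₂, hb, h₁, h₂, hk⟩ := ha.exists_insert L k
    refine ⟨b₁, b₂, hb, hi.trans h₁, (Finset.forall_mem_insert _ _ _).2 ⟨hk, fun k' hk' => ?_⟩⟩
    rcases hK k' hk' with h | h
    · exact Or.inl (h.trans h₁)
    · exact h₂.imp h.trans h.trans

end Peaks

section Topology

variable {I : Type*} [PartialOrder I] {X : I → Type*} {p : ∀ i j : I, i ≤ j → X j → X i}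
  [∀ i, TopologicalSpace (X i)]
  (hcont : ∀ i j : I, ∀ hij : i ≤ j, Continuous (p i j hij))
include hcont

theorem isClosed_setOf_inY [∀ i, T2Space (X i)] (F : Set I) :
    IsClosed {y : ∀ i, X i | InY X p F y} := by
  simp only [InY, ofPred_forall]
  exact isClosed_iInter fun k => isClosed_iInter fun _ => isClosed_iInter fun j =>
    isClosed_iInter fun _ => isClosed_iInter fun h =>
      isClosed_eq ((hcont k j h).comp (continuous_apply j)) (continuous_apply k)

theorem exists_inXl_of_forall_finset [∀ i, CompactSpace (X i)] [∀ i, T2Space (X i)]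
    {E : Set (∀ i, X i)} (hE : IsClosed E) (h : ∀ K : Finset I, ∃ y ∈ E, InY X p ↑K y) :
    ∃ x ∈ E, InXl X p x := by
  classical
  let C : Finset I → Set (∀ i, X i) := fun K => E ∩ {y | InY X p ↑K y}
  have hC : ∀ K, IsClosed (C K) := fun K => hE.inter (isClosed_setOf_inY hcont _)
  have hanti : Antitone C := fun K K' hKK' y ⟨hy, hyK'⟩ =>
    ⟨hy, fun k hk j hj => hyK' k (hKK' hk) j (hKK' hj)⟩
  obtain ⟨x, hx⟩ := IsCompact.nonempty_iInter_of_directed_nonempty_isCompact_isClosed C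
    hanti.directed_ge h (fun K => (hC K).isCompact) hC
  rw [mem_iInter] at hx
  exact ⟨x, (hx ∅).1, fun i j hij => (hx {i, j}).2 i (by simp) j (by simp) hij⟩

end Topology

section Threads

variable {I : Type*} [PartialOrder I] {X : I → Type*} {p : ∀ i j : I, i ≤ j → X j → X i}

variable (X p) in
structure PeakThread where
  a₁ : I
  a₂ : I
  x₁ : X a₁
  x₂ : X a₂
  agree : ∀ d (h₁ : d ≤ a₁) (h₂ : d ≤ a₂), p d a₁ h₁ x₁ = p d a₂ h₂ x₂
  isPeakPair : IsPeakPair a₁ a₂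

def PeakThread.single (a : I) (x : X a) : PeakThread X p :=
  ⟨a, a, x, x, fun _ _ _ => rfl, isPeakPair_self a⟩

def PeakThread.swap (S : PeakThread X p) : PeakThread X p :=
  ⟨S.a₂, S.a₁, S.x₂, S.x₁, fun d h₂ h₁ => (S.agree d h₁ h₂).symm, S.isPeakPair.symm⟩

def PeakThread.mem (S : PeakThread X p) (d : I) : Prop := d ≤ S.a₁ ∨ d ≤ S.a₂

theorem PeakThread.mem_of_le (S : PeakThread X p) {k d : I} (hkd : k ≤ d) (hd : S.mem d) :
    S.mem k :=
  hd.imp hkd.trans hkd.trans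

variable (hcomp : ∀ i j k : I, ∀ hij : i ≤ j, ∀ hjk : j ≤ k, ∀ x : X k,
  p i j hij (p j k hjk x) = p i k (hij.trans hjk) x)

include hcomp in
theorem agree_of_agree_meet (L : DistribAlmostLattice I) {a b : I} {x : X a} {y : X b}
    (h : p (L.meet a b) a (L.meet_le_left a b) x = p (L.meet a b) b (L.meet_le_right a b) y)
    (d : I) (ha : d ≤ a) (hb : d ≤ b) : p d a ha x = p d b hb y := by
  have hd := L.le_meet ha hb
  rw [← hcomp d _ a hd (L.meet_le_left a b) x, h, hcomp]

variable [∀ i, Nonempty (X i)]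

open Classical in
noncomputable def PeakThread.val (S : PeakThread X p) (d : I) : X d :=
  if h : d ≤ S.a₁ then p d S.a₁ h S.x₁
  else if h : d ≤ S.a₂ then p d S.a₂ h S.x₂
  else Classical.arbitrary (X d)

theorem PeakThread.val_eq₁ (S : PeakThread X p) {d : I} (h : d ≤ S.a₁) :
    S.val d = p d S.a₁ h S.x₁ :=
  dif_pos h

theorem PeakThread.val_eq₂ (S : PeakThread X p) {d : I} (h : d ≤ S.a₂) :
    S.val d = p d S.a₂ h S.x₂ := by
  by_cases h₁ : d ≤ S.a₁
  · rw [S.val_eq₁ h₁, S.agree d h₁ h]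
  · exact (dif_neg h₁).trans (dif_pos h)

theorem PeakThread.val_swap (S : PeakThread X p) (d : I) : S.swap.val d = S.val d := by
  by_cases h₁ : d ≤ S.a₁
  · exact (S.swap.val_eq₂ h₁).trans (S.val_eq₁ h₁).symm
  by_cases h₂ : d ≤ S.a₂
  · exact (S.swap.val_eq₁ h₂).trans (S.val_eq₂ h₂).symm
  · simp [PeakThread.val, PeakThread.swap, h₁, h₂]

def PeakThread.Extends (S' S : PeakThread X p) : Prop :=
  ∀ d, S.mem d → S'.mem d ∧ S'.val d = S.val d

theorem PeakThread.Extends.refl (S : PeakThread X p) : Extends S S := fun _ hd => ⟨hd, rfl⟩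

theorem PeakThread.Extends.trans {S₃ S₂ S₁ : PeakThread X p} (h₃₂ : Extends S₃ S₂)
    (h₂₁ : Extends S₂ S₁) : Extends S₃ S₁ := fun d hd =>
  ⟨(h₃₂ d (h₂₁ d hd).1).1, (h₃₂ d (h₂₁ d hd).1).2.trans (h₂₁ d hd).2⟩

theorem PeakThread.Extends.of_swap {S' S : PeakThread X p} (h : Extends S' S.swap) :
    Extends S' S := fun d hd => ⟨(h d hd.symm).1, (h d hd.symm).2.trans (S.val_swap d)⟩

include hcomp

theorem PeakThread.val_thread (S : PeakThread X p) {k d : I} (hkd : k ≤ d) (hd : S.mem d) :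
    p k d hkd (S.val d) = S.val k := by
  rcases hd with h | h
  · rw [S.val_eq₁ h, S.val_eq₁ (hkd.trans h), hcomp]
  · rw [S.val_eq₂ h, S.val_eq₂ (hkd.trans h), hcomp]

theorem PeakThread.Extends.of_peaks {S' S : PeakThread X p}
    (h₁ : S'.mem S.a₁) (h₂ : S'.mem S.a₂)
    (hv₁ : S'.val S.a₁ = S.val S.a₁) (hv₂ : S'.val S.a₂ = S.val S.a₂) : Extends S' S := by
  have below : ∀ a, S'.mem a → S'.val a = S.val a → S.mem a →
      ∀ d ≤ a, S'.mem d ∧ S'.val d = S.val d := fun a ha hv haS d hd =>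
    ⟨S'.mem_of_le hd ha, by rw [← S'.val_thread hcomp hd ha, hv, S.val_thread hcomp hd haS]⟩
  rintro d (hd | hd)
  exacts [below _ h₁ hv₁ (Or.inl le_rfl) d hd, below _ h₂ hv₂ (Or.inr le_rfl) d hd]

variable (hsurj : ∀ i j : I, ∀ hij : i ≤ j, Function.Surjective (p i j hij))

include hsurj in
theorem PeakThread.exists_extends_mem_of_eq (L : DistribAlmostLattice I) (S : PeakThread X p)
    (hS : S.a₁ = S.a₂) (j : I) :
    ∃ S' : PeakThread X p, Extends S' S ∧ S'.mem j := by
  by_cases hj : ∃ u, j ≤ u ∧ S.a₁ ≤ u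
  · have ha := L.le_join_right j S.a₁ hj
    obtain ⟨z, hz⟩ := hsurj S.a₁ _ ha (S.val S.a₁)
    have hv : (single (p := p) _ z).val S.a₁ = S.val S.a₁ := (val_eq₁ _ ha).trans hz
    refine ⟨single _ z, .of_peaks hcomp (Or.inl ha) (Or.inl (hS ▸ ha)) hv (hS ▸ hv),
      Or.inl (L.le_join_left j S.a₁ hj)⟩
  · obtain ⟨w, hw⟩ := hsurj _ j (L.meet_le_left j S.a₁) (S.val (L.meet j S.a₁))
    let S' : PeakThread X p := ⟨j, S.a₁, w, S.val S.a₁,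
      agree_of_agree_meet hcomp L (hw.trans (S.val_thread hcomp _ (Or.inl le_rfl)).symm),
      isPeakPair_of_not_ub hj⟩
    have hv : S'.val S.a₁ = S.val S.a₁ :=
      (S'.val_eq₂ le_rfl).trans (S.val_thread hcomp le_rfl (Or.inl le_rfl))
    exact ⟨S', .of_peaks hcomp (Or.inr le_rfl) (Or.inr hS.ge) hv (hS ▸ hv), Or.inl le_rfl⟩

variable (L : DistribAlmostLattice I)
  (hcor : ∀ i j : I, ∀ hub : ∃ u, i ≤ u ∧ j ≤ u, ∀ xi : X i, ∀ xj : X j,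
    p (L.meet i j) i (L.meet_le_left i j) xi = p (L.meet i j) j (L.meet_le_right i j) xj →
    ∃ z : X (L.join i j),
      p i (L.join i j) (L.le_join_left i j hub) z = xi ∧
      p j (L.join i j) (L.le_join_right i j hub) z = xj)
include hcor in
/-- For separated peaks, condition (v) writes `j ∨ a₁` as `a₁ ∨ e` with `e ≤ a₂`, and
correctness glues the thread over `a₁` and `e` to a point at the new peak. -/
theorem PeakThread.exists_extends_mem_of_not_ub (S : PeakThread X p)
    (hS : ¬∃ u, S.a₁ ≤ u ∧ S.a₂ ≤ u) (j : I) (hj : ∃ u, j ≤ u ∧ S.a₁ ≤ u) :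
    ∃ S' : PeakThread X p, Extends S' S ∧ S'.mem j := by
  have hat := L.le_join_right j S.a₁ hj
  have hte := L.join_meet_eq_of_le hS hat
  set e := L.meet S.a₂ (L.join j S.a₁)
  have hea₂ : e ≤ S.a₂ := L.meet_le_left _ _
  have hub : ∃ u, S.a₁ ≤ u ∧ e ≤ u := ⟨_, hat, L.meet_le_right _ _⟩
  obtain ⟨z, hz₁, hze⟩ := hcor S.a₁ e hub (S.val S.a₁) (S.val e) (by
    rw [S.val_thread hcomp _ (Or.inl le_rfl), S.val_thread hcomp _ (Or.inr hea₂)])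
  have hb₁ := L.le_join_left S.a₁ e hub
  have agree : ∀ d (h₁ : d ≤ L.join S.a₁ e) (h₂ : d ≤ S.a₂),
      p d _ h₁ z = p d S.a₂ h₂ (S.val S.a₂) := fun d h₁ h₂ => by
    have hde : d ≤ e := L.le_meet h₂ (hte ▸ h₁)
    rw [← hcomp d e _ hde (L.le_join_right S.a₁ e hub) z, hze,
      S.val_thread hcomp hde (Or.inr hea₂), S.val_thread hcomp h₂ (Or.inr le_rfl)]
  let S' : PeakThread X p := ⟨_, S.a₂, z, S.val S.a₂, agree,
    isPeakPair_of_not_ub fun ⟨u, h₁, h₂⟩ => hS ⟨u, hb₁.trans h₁, h₂⟩⟩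
  refine ⟨S', .of_peaks hcomp (Or.inl hb₁) (Or.inr le_rfl) ((S'.val_eq₁ hb₁).trans hz₁)
    ((S'.val_eq₂ le_rfl).trans (S.val_thread hcomp le_rfl (Or.inr le_rfl))), Or.inl ?_⟩
  show j ≤ L.join S.a₁ e
  exact hte ▸ L.le_join_left j S.a₁ hj

include hsurj hcor

theorem PeakThread.exists_extends_mem (S : PeakThread X p) (j : I) :
    ∃ S' : PeakThread X p, Extends S' S ∧ S'.mem j := by
  by_cases h₁₂ : ∃ u, S.a₁ ≤ u ∧ S.a₂ ≤ u
  · exact S.exists_extends_mem_of_eq hcomp hsurj L (S.isPeakPair h₁₂) j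
  by_cases hj₁ : ∃ u, j ≤ u ∧ S.a₁ ≤ u
  · exact S.exists_extends_mem_of_not_ub hcomp L hcor h₁₂ j hj₁
  by_cases hj₂ : ∃ u, j ≤ u ∧ S.a₂ ≤ u
  · obtain ⟨S', hS', hj⟩ := S.swap.exists_extends_mem_of_not_ub hcomp L hcor
      (fun ⟨u, h₂, h₁⟩ => h₁₂ ⟨u, h₁, h₂⟩) j hj₂
    exact ⟨S', hS'.of_swap, hj⟩
  exact absurd (((L.two_of_three j _ _).resolve_left hj₁).resolve_left hj₂) h₁₂

theorem PeakThread.exists_extends_forall_mem (S : PeakThread X p) (K : Finset I) :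
    ∃ S' : PeakThread X p, Extends S' S ∧ ∀ k ∈ K, S'.mem k := by
  classical
  induction K using Finset.induction_on with
  | empty => exact ⟨S, Extends.refl S, by simp⟩
  | insert k K _ ih =>
    obtain ⟨S', hS', hK⟩ := ih
    obtain ⟨S'', hS'', hk⟩ := S'.exists_extends_mem hcomp hsurj L hcor k
    exact ⟨S'', hS''.trans hS', (Finset.forall_mem_insert _ _ _).2
      ⟨hk, fun k' hk' => (hS'' k' (hK k' hk')).1⟩⟩

variable [∀ i, TopologicalSpace (X i)] [∀ i, CompactSpace (X i)] [∀ i, T2Space (X i)]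
  (hcont : ∀ i j : I, ∀ hij : i ≤ j, Continuous (p i j hij))
include hcont

theorem PeakThread.exists_inXl_extends (S : PeakThread X p) :
    ∃ x, InXl X p x ∧ ∀ d, S.mem d → x d = S.val d := by
  have hE : IsClosed {y : ∀ i, X i | ∀ d, S.mem d → y d = S.val d} := by
    simp only [ofPred_forall]
    exact isClosed_iInter fun d => isClosed_iInter fun _ =>
      isClosed_eq (continuous_apply d) continuous_const
  obtain ⟨x, hxS, hx⟩ := exists_inXl_of_forall_finset hcont hE fun K => by
    obtain ⟨S', hS', hK⟩ := S.exists_extends_forall_mem hcomp hsurj L hcor K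
    exact ⟨S'.val, fun d hd => (hS' d hd).2,
      fun k _ j hj hkj => S'.val_thread hcomp hkj (hK j hj)⟩
  exact ⟨x, hx, hxS⟩

theorem surjective_proj (i : I) :
    Function.Surjective (fun x : {x : ∀ i, X i // InXl X p x} => x.1 i) := by
  intro xi
  obtain ⟨y, rfl⟩ := hsurj i i le_rfl xi
  obtain ⟨z, hz, hzS⟩ :=
    (PeakThread.single (p := p) i y).exists_inXl_extends hcomp hsurj L hcor hcont
  exact ⟨⟨z, hz⟩, (hzS i (Or.inl le_rfl)).trans (PeakThread.val_eq₁ _ le_rfl)⟩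

variable (hopen : ∀ i j : I, ∀ hij : i ≤ j, IsOpenMap (p i j hij))
include hopen

theorem image_proj_mem_nhds (x : ∀ i, X i) (hx : InXl X p x) (i : I) (J : Finset I)
    (u : ∀ i, Set (X i)) (hu : ∀ j ∈ J, IsOpen (u j) ∧ x j ∈ u j) :
    (fun y : {y : ∀ i, X i // InXl X p y} => y.1 i) '' {y | y.1 ∈ (J : Set I).pi u} ∈
      𝓝 (x i) := by
  obtain ⟨a₁, a₂, hpk, hia, hJ⟩ := exists_isPeakPair_cover L i J
  let box : ∀ a, Set (X a) := fun a => ⋂ j ∈ J, ⋂ h : j ≤ a, p j a h ⁻¹' u j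
  have hbox : ∀ a, IsOpen (box a) := fun a => isOpen_biInter_finset fun j hj =>
    isOpen_iInter_of_finite fun h => (hu j hj).1.preimage (hcont j a h)
  have hxbox : ∀ a, x a ∈ box a := fun a => mem_iInter₂.2 fun j hj => mem_iInter.2 fun h => by
    simp only [mem_preimage, hx j a h, (hu j hj).2]
  have hm₁ := L.meet_le_left a₁ a₂
  have hm₂ := L.meet_le_right a₁ a₂
  let A := box a₁ ∩ p _ a₁ hm₁ ⁻¹' (p _ a₂ hm₂ '' box a₂)
  have hA : IsOpen A := (hbox a₁).inter ((hopen _ _ _ _ (hbox a₂)).preimage (hcont _ _ _))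
  have hxA : x a₁ ∈ A := ⟨hxbox a₁, x a₂, hxbox a₂, by rw [hx, hx]⟩
  refine mem_of_superset ((hopen i a₁ hia _ hA).mem_nhds ⟨x a₁, hxA, hx i a₁ hia⟩) ?_
  rintro _ ⟨w₁, ⟨hw₁, w₂, hw₂, hw⟩, rfl⟩
  let S : PeakThread X p := ⟨a₁, a₂, w₁, w₂, agree_of_agree_meet hcomp L hw.symm, hpk⟩
  obtain ⟨z, hz, hzS⟩ := S.exists_inXl_extends hcomp hsurj L hcor hcont
  refine ⟨⟨z, hz⟩, fun j hj => ?_, (hzS i (Or.inl hia)).trans (S.val_eq₁ hia)⟩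
  rw [Subtype.coe_mk, hzS j (hJ j hj)]
  rcases hJ j hj with h | h
  · rw [S.val_eq₁ h]; exact mem_iInter.1 (mem_iInter₂.1 hw₁ j hj) h
  · rw [S.val_eq₂ h]; exact mem_iInter.1 (mem_iInter₂.1 hw₂ j hj) h

theorem isOpenMap_proj (i : I) :
    IsOpenMap (fun x : {x : ∀ i, X i // InXl X p x} => x.1 i) := by
  intro O hO
  rw [isOpen_iff_mem_nhds]
  rintro _ ⟨x, hxO, rfl⟩
  obtain ⟨W, hW, rfl⟩ := isOpen_induced_iff.mp hO
  obtain ⟨J, u, hu, hJW⟩ := isOpen_pi_iff.mp hW x.1 hxO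
  exact mem_of_superset (image_proj_mem_nhds hcomp hsurj L hcor hcont hopen x.1 x.2 i J u hu)
    (Set.image_mono fun y hy => hJW hy)

end Threads

end AmalgamatedLimit

theorem Xl_proj_open_continuous_surjective_general
    {I : Type*} [PartialOrder I] (L : DistribAlmostLattice I)
    (X : I → Type*) [∀ i, TopologicalSpace (X i)]
    [∀ i, Nonempty (X i)] [∀ i, CompactSpace (X i)] [∀ i, T2Space (X i)]
    (p : ∀ i j : I, i ≤ j → X j → X i)
    (hcont : ∀ i j : I, ∀ hij : i ≤ j, Continuous (p i j hij))
    (hopen : ∀ i j : I, ∀ hij : i ≤ j, IsOpenMap (p i j hij))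
    (hsurj : ∀ i j : I, ∀ hij : i ≤ j, Function.Surjective (p i j hij))
    (hcomp : ∀ i j k : I, ∀ hij : i ≤ j, ∀ hjk : j ≤ k, ∀ x : X k,
      p i j hij (p j k hjk x) = p i k (hij.trans hjk) x)
    (hcor : ∀ i j : I, ∀ hub : ∃ u, i ≤ u ∧ j ≤ u, ∀ xi : X i, ∀ xj : X j,
      p (L.meet i j) i (L.meet_le_left i j) xi =
        p (L.meet i j) j (L.meet_le_right i j) xj →
      ∃ z : X (L.join i j),
        p i (L.join i j) (L.le_join_left i j hub) z = xi ∧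
        p j (L.join i j) (L.le_join_right i j hub) z = xj) :
    ∀ i : I,
      IsOpenMap (fun x : {x : ∀ i, X i // InXl X p x} => x.1 i) ∧
      Continuous (fun x : {x : ∀ i, X i // InXl X p x} => x.1 i) ∧
      Function.Surjective (fun x : {x : ∀ i, X i // InXl X p x} => x.1 i) ∧
      (∀ j : I, ∀ hij : i ≤ j, ∀ x : {x : ∀ i, X i // InXl X p x},
        p i j hij (x.1 j) = x.1 i) := fun i =>
  ⟨AmalgamatedLimit.isOpenMap_proj hcomp hsurj L hcor hcont hopen i,
    (continuous_apply i).comp continuous_subtype_val,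
    AmalgamatedLimit.surjective_proj hcomp hsurj L hcor hcont i,
    fun j hij x => x.2 i j hij⟩

/-- Each projection `p^ℓ_i : X_ℓ → X_i` is an open continuous surjection commuting with
the maps of the system. -/
theorem Xl_proj_open_continuous_surjective
    {I : Type*} [PartialOrder I] (L : DistribAlmostLattice I)
    (X : I → Type*) [∀ i, TopologicalSpace (X i)]
    [∀ i, Nonempty (X i)] [∀ i, CompactSpace (X i)] [∀ i, T2Space (X i)]
    (p : ∀ i j : I, i ≤ j → X j → X i)
    (hcont : ∀ i j : I, ∀ hij : i ≤ j, Continuous (p i j hij))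
    (hopen : ∀ i j : I, ∀ hij : i ≤ j, IsOpenMap (p i j hij))
    (hsurj : ∀ i j : I, ∀ hij : i ≤ j, Function.Surjective (p i j hij))
    (hid : ∀ i : I, ∀ hii : i ≤ i, ∀ x : X i, p i i hii x = x)
    (hcomp : ∀ i j k : I, ∀ hij : i ≤ j, ∀ hjk : j ≤ k, ∀ x : X k,
      p i j hij (p j k hjk x) = p i k (hij.trans hjk) x)
    (hcor : ∀ i j : I, ∀ hub : ∃ u, i ≤ u ∧ j ≤ u, ∀ xi : X i, ∀ xj : X j,
      p (L.meet i j) i (L.meet_le_left i j) xi =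
        p (L.meet i j) j (L.meet_le_right i j) xj →
      ∃ z : X (L.join i j),
        p i (L.join i j) (L.le_join_left i j hub) z = xi ∧
        p j (L.join i j) (L.le_join_right i j hub) z = xj) :
    ∀ i : I,
      IsOpenMap (fun x : {x : ∀ i, X i // InXl X p x} => x.1 i) ∧
      Continuous (fun x : {x : ∀ i, X i // InXl X p x} => x.1 i) ∧
      Function.Surjective (fun x : {x : ∀ i, X i // InXl X p x} => x.1 i) ∧
      (∀ j : I, ∀ hij : i ≤ j, ∀ x : {x : ∀ i, X i // InXl X p x},
        p i j hij (x.1 j) = x.1 i) :=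
  Xl_proj_open_continuous_surjective_general L X p hcont hopen hsurj hcomp hcor
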